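/- Let p be a prime and χ : ℚ_p → ℂ the standard additive character χ(x) = e^{2πi{x}} where {x} denotes the p-adic fractional part of x. If ξ_0, ξ_1, ..., ξ_{m-1} are m points in ℚ_p with ∑_{j=0}^{m-1} χ(ξ_j) = 0, then p divides m. -/

import Mathlib

open scoped BigOperators

/-- Every `p`-adic number is within distance `1` of a rational of the form `k / p^n`. -/
theorem padicFrac_exists (p : ℕ) [hp : Fact p.Prime] (x : ℚ_[p]) :
    ∃ kn : ℤ × ℕ, ‖x - (kn.1 : ℚ_[p]) / (p : ℚ_[p]) ^ kn.2‖ ≤ 1 := by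
  obtain ⟨n, hn⟩ := exists_nat_gt ‖x‖
  have hp1 : 1 < (p : ℝ) := by exact_mod_cast hp.out.one_lt
  have hple : (n : ℝ) < (p : ℝ) ^ n := by exact_mod_cast (Nat.lt_pow_self hp.out.one_lt : n < p ^ n)
  have hz : ‖x * (p : ℚ_[p]) ^ n‖ ≤ 1 := by
    rw [norm_mul, norm_pow, Padic.norm_p]
    have h1 : ‖x‖ ≤ (p : ℝ) ^ n := le_of_lt (lt_trans hn hple)
    have h2 : (0:ℝ) < (p : ℝ) ^ n := by positivity
    calc ‖x‖ * ((p:ℝ)⁻¹) ^ n ≤ (p : ℝ) ^ n * ((p:ℝ)⁻¹) ^ n := by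
          gcongr
      _ = 1 := by rw [← mul_pow, mul_inv_cancel₀ (by linarith : (0:ℝ) < p).ne', one_pow]
  set z : ℤ_[p] := ⟨x * (p : ℚ_[p]) ^ n, hz⟩ with hzdef
  obtain ⟨y, hy⟩ := Ideal.mem_span_singleton'.mp (PadicInt.appr_spec n z)
  refine ⟨((z.appr n : ℤ), n), ?_⟩
  have hpne : ((p : ℚ_[p]) ^ n) ≠ 0 := by
    apply pow_ne_zero
    exact_mod_cast hp.out.ne_zero
  have hxz : x - ((z.appr n : ℤ) : ℚ_[p]) / (p : ℚ_[p]) ^ n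
      = ((z - (z.appr n : ℤ_[p]) : ℤ_[p]) : ℚ_[p]) / (p : ℚ_[p]) ^ n := by
    push_cast
    field_simp [hzdef]
    rfl
  rw [hxz, norm_div]
  have hnorm : ‖((z - (z.appr n : ℤ_[p]) : ℤ_[p]) : ℚ_[p])‖ ≤ ((p:ℝ)⁻¹) ^ n := by
    rw [← PadicInt.norm_def, ← hy]
    rw [norm_mul, norm_pow, PadicInt.norm_p]
    calc ‖y‖ * ((p:ℝ)⁻¹) ^ n ≤ 1 * ((p:ℝ)⁻¹) ^ n := by
          gcongr; exact y.2
      _ = ((p:ℝ)⁻¹) ^ n := one_mul _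
  have hden : ‖(p : ℚ_[p]) ^ n‖ = ((p:ℝ)⁻¹) ^ n := by
    rw [norm_pow, Padic.norm_p]
  rw [hden]
  rw [div_le_one (by positivity)]
  exact hnorm

/-- The standard additive character `χ(x) = e^{2πi {x}}` on `ℚ_p`, where `{x}` is
the `p`-adic fractional part of `x`. -/
noncomputable def stdChar (p : ℕ) [Fact p.Prime] (x : ℚ_[p]) : ℂ :=
  Complex.exp (2 * Real.pi * Complex.I *
    (((Classical.choose (padicFrac_exists p x)).1 : ℂ) /
      (p : ℂ) ^ (Classical.choose (padicFrac_exists p x)).2))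

theorem stmt1 (p : ℕ) [Fact p.Prime] (m : ℕ) (ξ : Fin m → ℚ_[p])
    (h : ∑ j, stdChar p (ξ j) = 0) : p ∣ m := by
  classical
  have hpp : p.Prime := Fact.out
  have hp0 : (0:ℝ) < p := by exact_mod_cast hpp.pos
  set c : Fin m → ℤ × ℕ := fun j => Classical.choose (padicFrac_exists p (ξ j)) with hc
  set K : ℕ := Finset.univ.sup fun j => (c j).2 with hK
  set N : ℕ := K + 1 with hNdef
  have hpN : ((p : ℕ) ^ N : ℕ) ≠ 0 := pow_ne_zero _ hpp.ne_zero
  have hpNpos : 0 < p ^ N := Nat.pos_of_ne_zero hpN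
  set ζ : ℂ := Complex.exp (2 * Real.pi * Complex.I / ((p : ℕ) ^ N : ℕ)) with hζ
  have hprim : IsPrimitiveRoot ζ (p ^ N) := Complex.isPrimitiveRoot_exp _ hpN
  set e : Fin m → ℤ := fun j => (c j).1 * (p : ℤ) ^ (N - (c j).2) with he
  set a : Fin m → ℕ := fun j => ((e j) % ((p : ℤ) ^ N)).toNat with ha
  have hpCne : ((p : ℂ)) ≠ 0 := by exact_mod_cast hpp.ne_zero
  have hterm : ∀ j, stdChar p (ξ j) = ζ ^ (a j) := by
    intro j
    have hnle : (c j).2 ≤ N := by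
      have h1 : (c j).2 ≤ K := Finset.le_sup (f := fun j => (c j).2) (Finset.mem_univ j)
      omega
    set k : ℤ := (c j).1
    set n : ℕ := (c j).2
    set q : ℤ := (e j) / ((p : ℤ) ^ N) with hq
    have hr0 : 0 ≤ (e j) % ((p : ℤ) ^ N) :=
      Int.emod_nonneg _ (by exact_mod_cast hpN)
    have haj : ((a j : ℤ)) = (e j) % ((p : ℤ) ^ N) := Int.toNat_of_nonneg hr0
    -- integer identity
    have hint : ((a j : ℤ)) = k * (p : ℤ) ^ (N - n) - q * (p : ℤ) ^ N := by
      have hej : e j = k * (p : ℤ) ^ (N - n) := rfl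
      rw [haj, hq, Int.emod_def, hej]
      ring
    have hζpow : (ζ : ℂ) ^ (a j) =
        Complex.exp (2 * Real.pi * Complex.I * ((a j : ℂ) / ((p : ℂ) ^ N))) := by
      rw [hζ, ← Complex.exp_nat_mul]
      congr 1
      push_cast
      ring
    rw [hζpow]
    show Complex.exp (2 * Real.pi * Complex.I * ((k : ℂ) / (p : ℂ) ^ n)) = _
    rw [Complex.exp_eq_exp_iff_exists_int]
    refine ⟨q, ?_⟩
    have hpow : ((p : ℂ)) ^ N = (p : ℂ) ^ n * (p : ℂ) ^ (N - n) := by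
      rw [← pow_add]
      congr 1
      omega
    have hcast : ((a j : ℂ)) = (k : ℂ) * (p : ℂ) ^ (N - n) - (q : ℂ) * (p : ℂ) ^ N := by
      exact_mod_cast congrArg (fun z : ℤ => (z : ℂ)) hint
    rw [hcast, hpow]
    field_simp
    ring
  set f : Polynomial ℤ := ∑ j, Polynomial.X ^ (a j) with hf
  have hroot : Polynomial.aeval ζ f = 0 := by
    rw [hf, map_sum]
    simp only [map_pow, Polynomial.aeval_X]
    rw [← h]
    exact (Finset.sum_congr rfl fun j _ => (hterm j).symm)
  have hNpos : 0 < p ^ N := hpNpos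
  have hint : IsIntegral ℤ ζ := hprim.isIntegral hNpos
  have hdvd : Polynomial.cyclotomic (p ^ N) ℤ ∣ f := by
    rw [Polynomial.cyclotomic_eq_minpoly hprim hNpos]
    exact minpoly.isIntegrallyClosed_dvd hint hroot
  obtain ⟨g, hg⟩ := hdvd
  have heval := congrArg (Polynomial.eval (1 : ℤ)) hg
  rw [Polynomial.eval_mul, hNdef, Polynomial.eval_one_cyclotomic_prime_pow] at heval
  have hfeval : Polynomial.eval (1 : ℤ) f = m := by
    rw [hf, Polynomial.eval_finset_sum]
    simp
  rw [hfeval] at heval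
  have : (p : ℤ) ∣ (m : ℤ) := ⟨Polynomial.eval 1 g, heval⟩
  exact_mod_cast this
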